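/- For every integer k ≥ 1, ∑_{n=1}^{F_{2k−1} − 1} ⌊φ² n⌋³ = (1/4)(F_{2k−1} − 1)(F_{2k+1} − 1) · (1/5)(L_{4k+2} − 5L_{2k+2} + 7). -/

import Mathlib

def lucas : ℕ → ℕ
  | 0 => 2
  | 1 => 1
  | n + 2 => lucas (n + 1) + lucas n

/-!
Write `a n = ⌊φ² n⌋` and `S_p(m) = ∑_{n < F_m} (a n)^p`. Since
`φ² F_{l+1} = F_{l+3} - ψ^{l+1}`, the block `[F_{l+1}, F_{l+2})` repeats `[0, F_l)` shifted by
`F_{l+3}`: `a (F_{l+1} + j) = F_{l+3} + a j` for `0 < j < F_l`, because the norm bound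
`|i - jφ| |i - jψ| ≥ 1` keeps `φ j` farther than `|ψ|^{l+1}` from every integer; only
`a F_{l+1}` drops by one, when `l` is odd. Expanding `(F_{l+3} + a j)^p` binomially expresses
`S_p(l+2)` through `S_p(l+1)` and the `S_q(l)`, `q ≤ p`, and the closed forms for
`p = 1, 2, 3`, polynomials in `F_m`, `F_{m+2}` and `(-1)^m`, satisfy this recursion modulo
Cassini's identity. For odd `m` the Lucas expression of the statement is
`5 (F_{m+2}² - 4 F_{m+2} + F_m + 1)`.
-/

open Finset Real goldenRatio
open Nat (fib)

theorem Int.floor_add_eq_floor_of_abs_lt {R : Type*} [CommRing R] [LinearOrder R]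
    [IsStrictOrderedRing R] [FloorRing R] {x δ : R} (h : ∀ i : ℤ, |δ| < |x - i|) :
    ⌊x + δ⌋ = ⌊x⌋ := by
  have hbelow : |δ| < x - ⌊x⌋ := by
    simpa [abs_of_nonneg (Int.fract_nonneg x)] using h ⌊x⌋
  have habove : |δ| < ⌊x⌋ + 1 - x := by
    have := h (⌊x⌋ + 1)
    rwa [Int.cast_add, Int.cast_one, abs_sub_comm,
      abs_of_pos (a := ⌊x⌋ + 1 - x) (by linarith [Int.lt_floor_add_one x])] at this
  rw [Int.floor_eq_iff]
  constructor <;> linarith [neg_abs_le δ, le_abs_self δ]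

theorem one_le_abs_sub_mul_goldenRatio_mul_abs_sub_mul_goldenConj {i j : ℤ} (hj : j ≠ 0) :
    1 ≤ |i - j * φ| * |i - j * ψ| := by
  have hnorm : (i - j * φ) * (i - j * ψ) = ((i ^ 2 - i * j - j ^ 2 : ℤ) : ℝ) := by
    push_cast
    linear_combination (-(i : ℝ) * j) * goldenRatio_add_goldenConj +
      (j : ℝ) ^ 2 * goldenRatio_mul_goldenConj
  have hne : i ^ 2 - i * j - j ^ 2 ≠ 0 := by
    intro h
    rw [h, Int.cast_zero, mul_eq_zero, sub_eq_zero, sub_eq_zero] at hnorm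
    rcases hnorm with h' | h'
    · exact (goldenRatio_irrational.intCast_mul hj).ne_int i h'.symm
    · exact (goldenConj_irrational.intCast_mul hj).ne_int i h'.symm
  rw [← abs_mul, hnorm]
  exact_mod_cast Int.one_le_abs hne

theorem abs_goldenConj_lt_one : |ψ| < 1 :=
  abs_lt.2 ⟨neg_one_lt_goldenConj, goldenConj_neg.trans one_pos⟩

theorem one_add_sqrt_five_mul_lt_goldenRatio_pow {j l : ℕ} (hj : j < fib l) :
    1 + √5 * j < φ ^ l := by
  have hfib : √5 * fib l = φ ^ l - ψ ^ l := by
    rw [coe_fib_eq]; field_simp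
  have hψ : -1 ≤ ψ ^ l :=
    (abs_le.1 ((abs_pow ψ l).trans_le (pow_le_one₀ (abs_nonneg ψ) abs_goldenConj_lt_one.le))).1
  have h5 : 2 < √5 := (lt_sqrt zero_le_two).2 (by norm_num)
  calc 1 + √5 * j ≤ 1 + √5 * (fib l - 1) := by
        gcongr; exact le_sub_iff_add_le.2 (by exact_mod_cast hj)
    _ = φ ^ l - ψ ^ l + 1 - √5 := by rw [mul_sub, hfib]; ring
    _ < φ ^ l := by linarith

noncomputable def upperWythoff (n : ℕ) : ℤ := ⌊φ ^ 2 * n⌋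

theorem goldenRatio_sq_mul_fib (n : ℕ) : φ ^ 2 * fib n = fib (n + 2) - ψ ^ n := by
  have := fib_succ_sub_goldenRatio_mul_fib n
  rw [goldenRatio_sq, Nat.fib_add_two]
  push_cast
  linarith

theorem abs_goldenConj_pow_lt_abs_goldenRatio_mul_sub {j l : ℕ} (hj₀ : 0 < j) (hj : j < fib l)
    (i : ℤ) : |ψ ^ (l + 1)| < |φ * j - i| := by
  by_contra! hle
  have hnorm := one_le_abs_sub_mul_goldenRatio_mul_abs_sub_mul_goldenConj (i := i) (j := j)
    (by exact_mod_cast hj₀.ne')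
  push_cast at hnorm
  have hconj : |i - j * ψ| ≤ |i - j * φ| + √5 * j := by
    calc |i - j * ψ| = |(i - j * φ) + √5 * j| := by rw [← goldenRatio_sub_goldenConj]; ring_nf
      _ ≤ |i - j * φ| + |√5 * j| := abs_add_le _ _
      _ = |i - j * φ| + √5 * j := by rw [abs_of_nonneg (a := √5 * j) (by positivity)]
  have hone : |ψ ^ (l + 1)| ≤ 1 := by
    rw [abs_pow]; exact pow_le_one₀ (abs_nonneg _) abs_goldenConj_lt_one.le
  have hscale : |ψ ^ (l + 1)| * φ ^ l = |ψ| := by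
    rw [← abs_of_pos (pow_pos goldenRatio_pos l), ← abs_mul, pow_succ', mul_assoc, ← mul_pow,
      goldenConj_mul_goldenRatio, abs_mul, abs_pow, abs_neg, abs_one, one_pow, mul_one]
  have hpos : 0 < |ψ ^ (l + 1)| := abs_pos.2 (pow_ne_zero _ goldenConj_ne_zero)
  rw [abs_sub_comm, mul_comm] at hle
  refine lt_irrefl (1 : ℝ) ?_
  calc 1 ≤ |i - j * φ| * |i - j * ψ| := hnorm
    _ ≤ |ψ ^ (l + 1)| * (1 + √5 * j) := mul_le_mul hle (by linarith) (abs_nonneg _) hpos.le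
    _ < |ψ ^ (l + 1)| * φ ^ l :=
      mul_lt_mul_of_pos_left (one_add_sqrt_five_mul_lt_goldenRatio_pow hj) hpos
    _ = |ψ| := hscale
    _ < 1 := abs_goldenConj_lt_one

theorem floor_goldenRatio_sq_mul_sub_goldenConj_pow {j l : ℕ} (hj₀ : 0 < j) (hj : j < fib l) :
    ⌊φ ^ 2 * j - ψ ^ (l + 1)⌋ = upperWythoff j := by
  rw [sub_eq_add_neg, upperWythoff]
  refine Int.floor_add_eq_floor_of_abs_lt fun i => ?_
  have hshift : φ ^ 2 * j - i = φ * j - ((i - j : ℤ) : ℝ) := by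
    rw [goldenRatio_sq]; push_cast; ring
  rw [abs_neg, hshift]
  exact abs_goldenConj_pow_lt_abs_goldenRatio_mul_sub hj₀ hj _

theorem upperWythoff_fib_add {j l : ℕ} (hj₀ : 0 < j) (hj : j < fib l) :
    upperWythoff (fib (l + 1) + j) = fib (l + 3) + upperWythoff j := by
  have h : φ ^ 2 * ((fib (l + 1) + j : ℕ) : ℝ) =
      (φ ^ 2 * j - ψ ^ (l + 1)) + fib (l + 3) := by
    push_cast; rw [mul_add, goldenRatio_sq_mul_fib]; ring
  rw [upperWythoff, h, Int.floor_add_natCast, floor_goldenRatio_sq_mul_sub_goldenConj_pow hj₀ hj,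
    add_comm]

theorem upperWythoff_fib_add_one (l : ℕ) :
    (upperWythoff (fib (l + 1)) : ℝ) = fib (l + 3) - (1 - (-1) ^ l) / 2 := by
  have h : φ ^ 2 * (fib (l + 1) : ℝ) = -ψ ^ (l + 1) + fib (l + 3) := by
    rw [goldenRatio_sq_mul_fib]; ring
  have hlt : |ψ ^ (l + 1)| < 1 := by
    rw [abs_pow]; exact pow_lt_one₀ (abs_nonneg _) abs_goldenConj_lt_one (by omega)
  rw [upperWythoff, h, Int.floor_add_natCast]
  rcases Nat.even_or_odd l with hl | hl
  · have hneg : ψ ^ (l + 1) < 0 := hl.add_one.pow_neg goldenConj_neg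
    have : ⌊-ψ ^ (l + 1)⌋ = 0 :=
      Int.floor_eq_zero_iff.2 ⟨by linarith, by linarith [neg_abs_le (ψ ^ (l + 1))]⟩
    rw [this, hl.neg_one_pow]; push_cast; ring
  · have hpos : 0 < ψ ^ (l + 1) := hl.add_one.pow_pos goldenConj_ne_zero
    have : ⌊-ψ ^ (l + 1)⌋ = -1 := Int.floor_eq_iff.2
      ⟨by push_cast; linarith [le_abs_self (ψ ^ (l + 1))], by push_cast; linarith⟩
    rw [this, hl.neg_one_pow]; push_cast; ring

theorem upperWythoff_one : upperWythoff 1 = 2 := by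
  rw [upperWythoff, Nat.cast_one, mul_one, goldenRatio_sq, Int.floor_eq_iff]
  constructor <;> push_cast <;> linarith [one_lt_goldenRatio, goldenRatio_lt_two]

theorem sum_range_fib_add_two_upperWythoff {M : Type*} [AddCommGroup M] (f : ℤ → M) (l : ℕ) :
    ∑ n ∈ range (fib (l + 2)), f (upperWythoff n) =
      ∑ n ∈ range (fib (l + 1)), f (upperWythoff n) +
        ∑ j ∈ range (fib l), f (fib (l + 3) + upperWythoff j) +
          (f (upperWythoff (fib (l + 1))) - f (fib (l + 3))) := by
  rw [Nat.fib_add_two, add_comm (fib l), sum_range_add, add_assoc]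
  congr 1
  rcases l with _ | l
  · simp [upperWythoff_one, show fib 3 = 2 by rfl]
  · obtain ⟨N, hN⟩ : ∃ N, fib (l + 1) = N + 1 := Nat.exists_eq_succ_of_ne_zero (by simp)
    have hshift : ∀ j ∈ range N, f (upperWythoff (fib (l + 1 + 1) + (j + 1))) =
        f (fib (l + 1 + 3) + upperWythoff (j + 1)) := fun j hj => by
      rw [upperWythoff_fib_add j.succ_pos (by rw [hN]; simpa using hj)]
    rw [hN, sum_range_succ', sum_range_succ', sum_congr rfl hshift]
    simp [upperWythoff]

theorem sum_add_pow_eq_sum_choose {ι R : Type*} [CommSemiring R] (s : Finset ι) (a : R)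
    (x : ι → R) (p : ℕ) :
    ∑ i ∈ s, (a + x i) ^ p =
      ∑ q ∈ range (p + 1), a ^ (p - q) * p.choose q * ∑ i ∈ s, x i ^ q := by
  simp_rw [add_comm a, add_pow, mul_sum]
  rw [sum_comm]
  exact sum_congr rfl fun q _ => sum_congr rfl fun i _ => by ring

noncomputable def upperWythoffMoment (p m : ℕ) : ℝ :=
  ∑ n ∈ range (fib m), (upperWythoff n : ℝ) ^ p

theorem upperWythoffMoment_zero_left (m : ℕ) : upperWythoffMoment 0 m = fib m := by
  simp [upperWythoffMoment]

theorem upperWythoffMoment_add_two (p l : ℕ) :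
    upperWythoffMoment p (l + 2) = upperWythoffMoment p (l + 1) +
      ∑ q ∈ range (p + 1), (fib (l + 3) : ℝ) ^ (p - q) * p.choose q * upperWythoffMoment q l +
        ((upperWythoff (fib (l + 1)) : ℝ) ^ p - (fib (l + 3) : ℝ) ^ p) := by
  simpa only [upperWythoffMoment, Int.cast_add, Int.cast_natCast, sum_add_pow_eq_sum_choose] using
    sum_range_fib_add_two_upperWythoff (fun a : ℤ => (a : ℝ) ^ p) l

theorem fib_add_one_sq_sub_fib_mul_fib_add_one_sub_fib_sq (m : ℕ) :
    (fib (m + 1) : ℝ) ^ 2 - fib m * fib (m + 1) - fib m ^ 2 = (-1) ^ m := by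
  induction m with
  | zero => simp
  | succ m ih =>
    rw [Nat.fib_add_two, pow_succ]
    push_cast
    linear_combination -ih

theorem cast_fib_add_two (n : ℕ) : (fib (n + 2) : ℝ) = fib n + fib (n + 1) := by
  exact_mod_cast Nat.fib_add_two

theorem sq_neg_one_pow {R : Type*} [Monoid R] [HasDistribNeg R] (n : ℕ) :
    ((-1 : R) ^ n) ^ 2 = 1 := by
  rw [← pow_mul, pow_mul', neg_one_sq, one_pow]

theorem upperWythoffMoment_one (m : ℕ) :
    upperWythoffMoment 1 m = (fib m - 1) * (fib (m + 2) - 1) / 2 := by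
  induction m using Nat.twoStepInduction with
  | zero => norm_num [upperWythoffMoment]
  | one => simp [upperWythoffMoment, upperWythoff]
  | more l ih₀ ih₁ =>
    rw [upperWythoffMoment_add_two, upperWythoff_fib_add_one]
    simp only [sum_range_succ, sum_range_zero, zero_add, Nat.reduceSub, Nat.choose_succ_self_right,
      Nat.choose_self, upperWythoffMoment_zero_left, ih₀, ih₁]
    grind [fib_add_one_sq_sub_fib_mul_fib_add_one_sub_fib_sq l, cast_fib_add_two l,
      cast_fib_add_two (l + 1), cast_fib_add_two (l + 2), pow_succ (-1 : ℝ) l,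
      pow_succ (-1 : ℝ) (l + 1), sq_neg_one_pow (R := ℝ) l]

theorem upperWythoffMoment_two (m : ℕ) :
    upperWythoffMoment 2 m =
      (fib m - 1) * (2 * fib (m + 2) ^ 2 - 6 * fib (m + 2) + fib m + 3 + (-1) ^ m) / 6 := by
  induction m using Nat.twoStepInduction with
  | zero => norm_num [upperWythoffMoment]
  | one => simp [upperWythoffMoment, upperWythoff]
  | more l ih₀ ih₁ =>
    rw [upperWythoffMoment_add_two, upperWythoff_fib_add_one]
    simp only [sum_range_succ, sum_range_zero, zero_add, Nat.reduceSub, Nat.choose_zero_right,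
      Nat.choose_succ_self_right, Nat.choose_self, upperWythoffMoment_zero_left,
      upperWythoffMoment_one, ih₀, ih₁]
    grind [fib_add_one_sq_sub_fib_mul_fib_add_one_sub_fib_sq l, cast_fib_add_two l,
      cast_fib_add_two (l + 1), cast_fib_add_two (l + 2), pow_succ (-1 : ℝ) l,
      pow_succ (-1 : ℝ) (l + 1), sq_neg_one_pow (R := ℝ) l]

theorem upperWythoffMoment_three (m : ℕ) :
    upperWythoffMoment 3 m = (fib m - 1) * (fib (m + 2) - 1) *
      (fib (m + 2) ^ 2 - 4 * fib (m + 2) + fib m + 2 + (-1) ^ m) / 4 := by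
  induction m using Nat.twoStepInduction with
  | zero => norm_num [upperWythoffMoment]
  | one => simp [upperWythoffMoment, upperWythoff]
  | more l ih₀ ih₁ =>
    rw [upperWythoffMoment_add_two, upperWythoff_fib_add_one]
    simp only [sum_range_succ, sum_range_zero, zero_add, Nat.reduceSub, Nat.choose_zero_right,
      Nat.choose_one_right, Nat.choose_succ_self_right, Nat.choose_self,
      upperWythoffMoment_zero_left, upperWythoffMoment_one, upperWythoffMoment_two, ih₀, ih₁]
    grind [fib_add_one_sq_sub_fib_mul_fib_add_one_sub_fib_sq l, cast_fib_add_two l,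
      cast_fib_add_two (l + 1), cast_fib_add_two (l + 2), pow_succ (-1 : ℝ) l,
      pow_succ (-1 : ℝ) (l + 1), sq_neg_one_pow (R := ℝ) l]

theorem sum_Icc_upperWythoff_pow {p : ℕ} (hp : p ≠ 0) (m : ℕ) :
    ∑ n ∈ Icc 1 (fib m - 1), (upperWythoff n : ℝ) ^ p = upperWythoffMoment p m := by
  rw [upperWythoffMoment]
  generalize fib m = N
  rcases N with _ | N
  · simp
  · rw [add_tsub_cancel_right, ← Ico_add_one_right_eq_Icc, range_eq_Ico,
      sum_eq_sum_Ico_succ_bot N.succ_pos]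
    simp [upperWythoff, hp]

theorem lucas_add_one (n : ℕ) : lucas (n + 1) = fib n + fib (n + 2) := by
  induction n using Nat.twoStepInduction with
  | zero => rfl
  | one => rfl
  | more n ih₀ ih₁ =>
    rw [lucas, ih₀, ih₁]
    grind [Nat.fib_add_two]

theorem A'_odd_three (k : ℕ) (hk : 1 ≤ k) :
    (∑ n ∈ Finset.Icc 1 (Nat.fib (2 * k - 1) - 1),
        (⌊((1 + Real.sqrt 5) / 2) ^ 2 * (n : ℝ)⌋ : ℝ) ^ 3) =
      (1 / 4) * ((Nat.fib (2 * k - 1) : ℝ) - 1) * ((Nat.fib (2 * k + 1) : ℝ) - 1) *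
        ((1 / 5) * ((lucas (4 * k + 2) : ℝ) - 5 * (lucas (2 * k + 2) : ℝ) + 7)) := by
  obtain ⟨j, rfl⟩ : ∃ j, k = j + 1 := ⟨k - 1, by omega⟩
  set m := 2 * j + 1
  rw [show 2 * (j + 1) - 1 = m by omega, show 2 * (j + 1) + 1 = m + 2 by omega,
    show 4 * (j + 1) + 2 = 2 * m + 3 + 1 by omega, show 2 * (j + 1) + 2 = m + 2 + 1 by omega]
  refine (sum_Icc_upperWythoff_pow three_ne_zero m).trans ?_
  rw [upperWythoffMoment_three, lucas_add_one, lucas_add_one]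
  have hodd : (-1 : ℝ) ^ m = -1 := (odd_two_mul_add_one j).neg_one_pow
  have hlo : (fib (2 * m + 3) : ℝ) = fib (m + 2) ^ 2 + fib (m + 1) ^ 2 := by
    exact_mod_cast Nat.fib_two_mul_add_one (m + 1)
  have hhi : (fib (2 * m + 3 + 2) : ℝ) = fib (m + 3) ^ 2 + fib (m + 2) ^ 2 := by
    exact_mod_cast Nat.fib_two_mul_add_one (m + 2)
  grind [fib_add_one_sq_sub_fib_mul_fib_add_one_sub_fib_sq m, cast_fib_add_two m,
    cast_fib_add_two (m + 1), cast_fib_add_two (m + 2)]
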